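/- arXiv:1812.05222 — 2 statements merged into one kernel-verified Lean document; each statement's English description precedes it below -/
import Mathlib

section
/- The product of a Bézier function of degree D_1 and a Bézier function of degree D_2 on the standard simplex is a Bézier function of degree D_1 + D_2. -/
noncomputable def bezierFun (M D : ℕ) (p : (Fin M → ℕ) → ℝ) (t : Fin M → ℝ) : ℝ :=
  ∑ d ∈ Finset.Nat.antidiagonalTuple M D,
    (Nat.multinomial Finset.univ d : ℝ) * (∏ i, t i ^ d i) * p d

noncomputable def bezierMulCoeff (M D₁ D₂ : ℕ) (p q : (Fin M → ℕ) → ℝ)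
    (d : Fin M → ℕ) : ℝ :=
  (∑ x ∈ (Finset.Nat.antidiagonalTuple M D₁ ×ˢ Finset.Nat.antidiagonalTuple M D₂).filter
      (fun x => x.1 + x.2 = d),
    (Nat.multinomial Finset.univ x.1 : ℝ) * (Nat.multinomial Finset.univ x.2 : ℝ)
      * (p x.1 * q x.2)) / (Nat.multinomial Finset.univ d : ℝ)

/-- The product of Bézier functions of degrees `D₁` and `D₂` on the standard simplex
is a Bézier function of degree `D₁ + D₂`. -/
theorem bezier_mul (M D₁ D₂ : ℕ) (p : (Fin M → ℕ) → ℝ) (q : (Fin M → ℕ) → ℝ) :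
    ∃ r : (Fin M → ℕ) → ℝ, ∀ t ∈ stdSimplex ℝ (Fin M),
      bezierFun M D₁ p t * bezierFun M D₂ q t = bezierFun M (D₁ + D₂) r t := by
  refine ⟨bezierMulCoeff M D₁ D₂ p q, fun t _ => ?_⟩
  unfold bezierFun
  rw [Finset.sum_mul_sum]
  rw [← Finset.sum_product']
  rw [← Finset.sum_fiberwise_of_maps_to (g := fun x : (Fin M → ℕ) × (Fin M → ℕ) => x.1 + x.2)
      (t := Finset.Nat.antidiagonalTuple M (D₁ + D₂)) ?_]
  · apply Finset.sum_congr rfl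
    intro d hd
    have hmult : (0 : ℝ) < (Nat.multinomial Finset.univ d : ℝ) := by
      exact_mod_cast Nat.multinomial_pos _ _
    rw [bezierMulCoeff, mul_comm ((Nat.multinomial Finset.univ d : ℝ) * ∏ i, t i ^ d i) _,
      div_mul_eq_mul_div, mul_comm _ ((Nat.multinomial Finset.univ d : ℝ) * ∏ i, t i ^ d i),
      mul_comm (Nat.multinomial Finset.univ d : ℝ) (∏ i, t i ^ d i), mul_assoc,
      mul_div_assoc, mul_div_cancel_left₀ _ (ne_of_gt hmult), Finset.mul_sum]
    apply Finset.sum_congr rfl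
    intro x hx
    simp only [Finset.mem_filter] at hx
    have hsum : x.1 + x.2 = d := hx.2
    have hprod : (∏ i, t i ^ d i) = (∏ i, t i ^ x.1 i) * (∏ i, t i ^ x.2 i) := by
      rw [← Finset.prod_mul_distrib]
      apply Finset.prod_congr rfl
      intro i _
      rw [← pow_add, ← hsum]; rfl
    rw [hprod]; ring
  · intro x hx
    simp only [Finset.mem_product, Finset.Nat.mem_antidiagonalTuple] at hx ⊢
    rw [← hx.1, ← hx.2, ← Finset.sum_add_distrib]
    rfl
end

section
/- For every continuous map φ: Δ^{M-1} → ℝ^M there exists a sequence of Bézier simplices b^(i): Δ^{M-1} → ℝ^M such that sup_{t∈Δ^{M-1}} |φ(t) − b^(i)(t)| → 0 as i → ∞. -/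
/-!
By Stone–Weierstrass, each coordinate of `φ` is uniformly approximated on the simplex by a
polynomial. Since `∑ i, t i = 1` on the simplex, a polynomial of total degree at most `D` agrees
there with a homogeneous polynomial of degree `D` (multiply its homogeneous components by powers
of `∑ i, X i`). Finally, a family of homogeneous polynomials of degree `D` is exactly a Bézier
simplex of degree `D`: its control points are the coefficients divided by the multinomial
coefficients.
-/

/-- A Bézier simplex of degree `D` in `ℝ^M` with control points `p`. -/
noncomputable def bezierMap (M D : ℕ) (p : (Fin M → ℕ) → (Fin M → ℝ)) (t : Fin M → ℝ) :
    Fin M → ℝ :=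
  ∑ d ∈ Finset.Nat.antidiagonalTuple M D,
    ((Nat.multinomial Finset.univ d : ℝ) * ∏ i, t i ^ d i) • p d

open MvPolynomial Finset

namespace MvPolynomial

theorem exists_eval_near_of_continuousOn {ι : Type*} {K : Set (ι → ℝ)} (hK : IsCompact K)
    {f : (ι → ℝ) → ℝ} (hf : ContinuousOn f K) {ε : ℝ} (hε : 0 < ε) :
    ∃ q : MvPolynomial ι ℝ, ∀ x ∈ K, |eval x q - f x| < ε := by
  have : CompactSpace K := isCompact_iff_compactSpace.mp hK
  let coord : ι → C(K, ℝ) := fun i =>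
    ⟨fun x => (x : ι → ℝ) i, (continuous_apply i).comp continuous_subtype_val⟩
  have aeval_coord_apply (q : MvPolynomial ι ℝ) (x : K) :
      aeval coord q x = eval (x : ι → ℝ) q := by
    rw [← ContinuousMap.evalAlgHom_apply ℝ ℝ x, comp_aeval_apply]
    rfl
  have hsep : (aeval (R := ℝ) coord).range.SeparatesPoints := by
    intro x y hxy
    obtain ⟨i, hi⟩ := Function.ne_iff.mp (Subtype.coe_ne_coe.mpr hxy)
    exact ⟨coord i, ⟨coord i, ⟨X i, aeval_X coord i⟩, rfl⟩, hi⟩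
  obtain ⟨⟨_, q, rfl⟩, hq⟩ :=
    ContinuousMap.exists_mem_subalgebra_near_continuous_of_separatesPoints
      _ hsep (K.domRestrict f) hf.domRestrict ε hε
  exact ⟨q, fun x hx => by simpa [aeval_coord_apply] using hq ⟨x, hx⟩⟩

variable {R : Type*} [CommSemiring R]

theorem exists_isHomogeneous_eval_eq_of_sum_eq_one {ι : Type*} [Fintype ι]
    (q : MvPolynomial ι R) {D : ℕ} (hD : q.totalDegree ≤ D) :
    ∃ q' : MvPolynomial ι R, q'.IsHomogeneous D ∧
      ∀ t : ι → R, ∑ i, t i = 1 → eval t q' = eval t q := by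
  refine ⟨∑ n ∈ range (D + 1), homogeneousComponent n q * (∑ i, X i) ^ (D - n), ?_, ?_⟩
  · refine IsHomogeneous.sum _ _ _ fun n hn => ?_
    have hsum : (∑ i, X i : MvPolynomial ι R).IsHomogeneous 1 :=
      IsHomogeneous.sum _ _ _ fun i _ => isHomogeneous_X R i
    convert (homogeneousComponent_isHomogeneous n q).mul (hsum.pow (D - n)) using 1
    have := mem_range.mp hn
    omega
  · intro t ht
    have hcomponents : ∑ n ∈ range (D + 1), homogeneousComponent n q = q := by
      rw [← sum_subset (range_subset_range.mpr (Nat.succ_le_succ hD))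
        fun n _ hn => homogeneousComponent_eq_zero n q (by simpa using hn),
        sum_homogeneousComponent]
    simp only [map_sum, map_mul, map_pow, eval_X, ht, one_pow, mul_one]
    rw [← map_sum, hcomponents]

theorem IsHomogeneous.eval_eq_sum_antidiagonalTuple {M D : ℕ} {q : MvPolynomial (Fin M) R}
    (hq : q.IsHomogeneous D) (t : Fin M → R) :
    eval t q = ∑ d ∈ Nat.antidiagonalTuple M D,
      coeff (Finsupp.equivFunOnFinite.symm d) q * ∏ i, t i ^ d i := by
  let e : (Fin M → ℕ) ↪ (Fin M →₀ ℕ) := Finsupp.equivFunOnFinite.symm.toEmbedding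
  have hsupport : q.support ⊆ (Nat.antidiagonalTuple M D).map e := by
    intro d hd
    refine mem_map.mpr ⟨d, ?_, Finsupp.equivFunOnFinite.symm_apply_apply d⟩
    rw [Nat.mem_antidiagonalTuple, ← hq (mem_support_iff.mp hd)]
    exact d.degree_eq_sum.symm.trans (DFunLike.congr_fun Finsupp.degree_eq_weight_one d)
  rw [eval_eq', sum_subset hsupport fun d _ hd => by rw [notMem_support_iff.mp hd, zero_mul],
    sum_map]
  rfl

end MvPolynomial

noncomputable def bezierControlPoints {M : ℕ} (q : Fin M → MvPolynomial (Fin M) ℝ)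
    (d : Fin M → ℕ) : Fin M → ℝ :=
  fun j => coeff (Finsupp.equivFunOnFinite.symm d) (q j) / Nat.multinomial univ d

theorem bezierMap_bezierControlPoints {M D : ℕ} {q : Fin M → MvPolynomial (Fin M) ℝ}
    (hq : ∀ j, (q j).IsHomogeneous D) (t : Fin M → ℝ) :
    bezierMap M D (bezierControlPoints q) t = fun j => eval t (q j) := by
  ext j
  rw [(hq j).eval_eq_sum_antidiagonalTuple, bezierMap, Finset.sum_apply]
  refine sum_congr rfl fun d _ => ?_
  have hmultinomial : (Nat.multinomial univ d : ℝ) ≠ 0 :=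
    Nat.cast_ne_zero.mpr (Nat.multinomial_pos _ _).ne'
  simp only [Pi.smul_apply, smul_eq_mul, bezierControlPoints]
  field_simp

theorem exists_bezierMap_near (M : ℕ) {φ : (Fin M → ℝ) → (Fin M → ℝ)}
    (hφ : ContinuousOn φ (stdSimplex ℝ (Fin M))) {ε : ℝ} (hε : 0 < ε) :
    ∃ (D : ℕ) (p : (Fin M → ℕ) → (Fin M → ℝ)),
      ∀ t ∈ stdSimplex ℝ (Fin M), ‖φ t - bezierMap M D p t‖ < ε := by
  choose q hq using fun j => exists_eval_near_of_continuousOn (isCompact_stdSimplex ℝ (Fin M))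
    ((continuous_apply j).comp_continuousOn hφ) hε
  let D := univ.sup fun j => (q j).totalDegree
  choose q' hq'_homogeneous hq'_eval using fun j =>
    (q j).exists_isHomogeneous_eval_eq_of_sum_eq_one
      (le_sup (f := fun j => (q j).totalDegree) (mem_univ j))
  refine ⟨D, bezierControlPoints q', fun t ht => (pi_norm_lt_iff hε).mpr fun j => ?_⟩
  rw [bezierMap_bezierControlPoints hq'_homogeneous, Pi.sub_apply, hq'_eval j t ht.2,
    Real.norm_eq_abs, abs_sub_comm]
  exact hq j t ht

/-- Every continuous map `φ : Δ^{M-1} → ℝ^M` is a uniform limit of Bézier simplices. -/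
theorem bezier_simplex_approximation (M : ℕ) (φ : (Fin M → ℝ) → (Fin M → ℝ))
    (hφ : ContinuousOn φ (stdSimplex ℝ (Fin M))) :
    ∃ (Dseq : ℕ → ℕ) (pseq : ℕ → (Fin M → ℕ) → (Fin M → ℝ)),
      ∀ ε > (0 : ℝ), ∃ N : ℕ, ∀ i ≥ N, ∀ t ∈ stdSimplex ℝ (Fin M),
        ‖φ t - bezierMap M (Dseq i) (pseq i) t‖ < ε := by
  choose Dseq pseq hseq using fun n : ℕ =>
    exists_bezierMap_near M hφ (Nat.one_div_pos_of_nat (n := n))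
  refine ⟨Dseq, pseq, fun ε hε => ?_⟩
  obtain ⟨N, hN⟩ := exists_nat_one_div_lt hε
  refine ⟨N, fun i hi t ht => ?_⟩
  calc ‖φ t - bezierMap M (Dseq i) (pseq i) t‖ < 1 / ((i : ℝ) + 1) := hseq i t ht
    _ ≤ 1 / ((N : ℝ) + 1) := Nat.one_div_le_one_div hi
    _ < ε := hN
end
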